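/- Let 𝒴 ⊆ ℂⁿ be a p-dimensional subspace whose smallest Ritz value η_p of A in 𝒴 satisfies η_p > λ_{p+1}, let i ∈ {1, …, p}, and let f : ℝ → ℝ satisfy |f(λ₁)| ≥ ⋯ ≥ |f(λ_p)| > max_{j ∈ {p+1, …, n}} |f(λⱼ)|. Then 𝒴' = f(A)𝒴 has dimension p, and its i-th largest Ritz value η'_i satisfies (λ_i − η'_i)/(η'_i − λ_{p+1}) ≤ ((max_{j ∈ {p+1, …, n}} |f(λⱼ)|)² / |f(λ_i)|²) · (λ_i − η_p)/(η_p − λ_{p+1}); in particular η'_i > λ_{p+1}. -/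

import Mathlib

/-!
Work in the eigenbasis: with `c_j = ⟪x_j, v⟫`, `ρ(v) - μ` has the sign of
`∑ (λ_j - μ) |c_j|²`, and `f(A)` multiplies `c_j` by `f(λ_j)`.

Since `ρ ≥ η_p > λ_{p+1}` on `𝒴`, no nonzero `y ∈ 𝒴` has `c_1 = ⋯ = c_p = 0`, so `f(A)` is
injective on `𝒴`. A dimension count gives an `i`-dimensional `𝒵 ⊆ 𝒴` on which
`c_{i+1} = ⋯ = c_p = 0`. Each remaining coordinate of `y ∈ 𝒵` has either `λ_j ≥ λ_i` and
`|f(λ_j)| ≥ |f(λ_i)|`, or `λ_j ≤ λ_{p+1}` and `|f(λ_j)| ≤ ν_p`; comparing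
`∑ (λ_j - η₀) f(λ_j)² |c_j|²` term by term with a multiple of `∑ (λ_j - η_p) |c_j|² ≥ 0` gives
`ρ(f(A)y) ≥ η₀`, where `η₀` is chosen so that `(λ_i - η₀)/(η₀ - λ_{p+1})` is the claimed bound.
By the max-min principle `η'_i ≥ η₀`, and `t ↦ (λ_i - t)/(t - λ_{p+1})` is decreasing.
-/

/-- The Rayleigh quotient `ρ(v) = (vᴴAv)/(vᴴv)` of the Hermitian matrix `A`. -/
noncomputable def rayleigh {n : ℕ} (A : Matrix (Fin n) (Fin n) ℂ)
    (v : EuclideanSpace ℂ (Fin n)) : ℝ :=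
  ((inner ℂ v (Matrix.toEuclideanLin A v) : ℂ)).re / ‖v‖ ^ 2

/-- The `i`-th largest Ritz value (1-indexed, `i ∈ {1, …, dim S}`) of the Hermitian
matrix `A` in the subspace `S`, characterized via the Courant–Fischer max-min
principle applied inside `S` (equivalently, the `i`-th largest eigenvalue of
`SᴴAS` for any orthonormal basis matrix `S`). -/
noncomputable def ritzValue {n : ℕ} (A : Matrix (Fin n) (Fin n) ℂ)
    (S : Submodule ℂ (EuclideanSpace ℂ (Fin n))) (i : ℕ) : ℝ :=
  sSup {r : ℝ | ∃ T : Submodule ℂ (EuclideanSpace ℂ (Fin n)), T ≤ S ∧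
    Module.finrank ℂ T = i ∧ ∀ v ∈ T, v ≠ 0 → r ≤ rayleigh A v}

/-- `f(A) = ∑ j, f(λ_j) x_j x_jᴴ` as a linear operator, for eigenvalues `lam`
and orthonormal eigenvectors `x` of `A`. -/
noncomputable def matFun {n : ℕ} (lam : Fin n → ℝ)
    (x : Fin n → EuclideanSpace ℂ (Fin n)) (f : ℝ → ℝ) :
    EuclideanSpace ℂ (Fin n) →ₗ[ℂ] EuclideanSpace ℂ (Fin n) :=
  ∑ j : Fin n, (f (lam j) : ℂ) • ((innerSL ℂ (x j)).toLinearMap.smulRight (x j))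

/-- `y` is a Ritz vector of `A` in `S` associated with the Ritz value `η`:
`y ∈ S`, `y ≠ 0`, `ρ(y) = η` and `Ay − ηy ⊥ S`. -/
def IsRitzVector {n : ℕ} (A : Matrix (Fin n) (Fin n) ℂ)
    (S : Submodule ℂ (EuclideanSpace ℂ (Fin n))) (η : ℝ)
    (y : EuclideanSpace ℂ (Fin n)) : Prop :=
  y ∈ S ∧ y ≠ 0 ∧ rayleigh A y = η ∧
    ∀ v ∈ S, (inner ℂ v (Matrix.toEuclideanLin A y - (η : ℂ) • y) : ℂ) = 0

open Module Submodule Finset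

namespace OrthonormalBasis

variable {𝕜 E ι : Type*} [RCLike 𝕜] [NormedAddCommGroup E] [InnerProductSpace 𝕜 E] [Fintype ι]
  (b : OrthonormalBasis ι 𝕜 E) {T : E →ₗ[𝕜] E} {lam : ι → ℝ}

theorem inner_apply_of_apply_eq_smul (hT : ∀ j, T (b j) = (lam j : 𝕜) • b j) (v : E) (j : ι) :
    inner 𝕜 (b j) (T v) = lam j * inner 𝕜 (b j) v := by
  classical
  conv_lhs => rw [← b.sum_repr' v]
  simp [map_sum, hT, inner_sum, inner_smul_right, b.inner_eq_ite, mul_comm]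

theorem re_inner_self_apply_of_apply_eq_smul (hT : ∀ j, T (b j) = (lam j : 𝕜) • b j) (v : E) :
    RCLike.re (inner 𝕜 v (T v)) = ∑ j, lam j * ‖inner 𝕜 (b j) v‖ ^ 2 := by
  rw [← b.sum_inner_mul_inner, map_sum]
  refine Finset.sum_congr rfl fun j _ => ?_
  rw [b.inner_apply_of_apply_eq_smul hT, ← inner_conj_symm, mul_left_comm, RCLike.conj_mul]
  norm_cast

end OrthonormalBasis

theorem Orthonormal.exists_orthonormalBasis_coe_eq {𝕜 E ι : Type*} [RCLike 𝕜]
    [NormedAddCommGroup E] [InnerProductSpace 𝕜 E] [FiniteDimensional 𝕜 E] [Fintype ι] {v : ι → E}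
    (hv : Orthonormal 𝕜 v) (hcard : Fintype.card ι = finrank 𝕜 E) :
    ∃ b : OrthonormalBasis ι 𝕜 E, ⇑b = v :=
  ⟨.mk hv (hv.linearIndependent.span_eq_top_of_card_eq_finrank' hcard).ge, by simp⟩

theorem matFun_apply_of_orthonormal {n : ℕ} {x : Fin n → EuclideanSpace ℂ (Fin n)}
    (hx : Orthonormal ℂ x) (lam : Fin n → ℝ) (f : ℝ → ℝ) (k : Fin n) :
    matFun lam x f (x k) = (f (lam k) : ℂ) • x k := by
  simp [matFun, orthonormal_iff_ite.mp hx]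

section Rayleigh

variable {n : ℕ} {A : Matrix (Fin n) (Fin n) ℂ}

theorem abs_rayleigh_le (A : Matrix (Fin n) (Fin n) ℂ) (v : EuclideanSpace ℂ (Fin n)) :
    |rayleigh A v| ≤ ‖LinearMap.toContinuousLinearMap (Matrix.toEuclideanLin A)‖ := by
  rcases eq_or_ne v 0 with rfl | hv
  · simp [rayleigh]
  have hv2 : 0 < ‖v‖ ^ 2 := by positivity
  rw [rayleigh, abs_div, abs_of_pos hv2, div_le_iff₀ hv2]
  calc |RCLike.re (inner ℂ v (Matrix.toEuclideanLin A v))|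
      ≤ ‖v‖ * ‖LinearMap.toContinuousLinearMap (Matrix.toEuclideanLin A) v‖ :=
        (RCLike.abs_re_le_norm _).trans (norm_inner_le_norm _ _)
    _ ≤ ‖v‖ * (‖LinearMap.toContinuousLinearMap (Matrix.toEuclideanLin A)‖ * ‖v‖) := by
        gcongr; exact ContinuousLinearMap.le_opNorm _ _
    _ = _ := by ring

theorem ritzValue_le_rayleigh {S : Submodule ℂ (EuclideanSpace ℂ (Fin n))} {k : ℕ}
    (hS : finrank ℂ S = k) {v : EuclideanSpace ℂ (Fin n)} (hv : v ∈ S) (hv0 : v ≠ 0) :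
    ritzValue A S k ≤ rayleigh A v := by
  refine csSup_le ⟨-‖LinearMap.toContinuousLinearMap (Matrix.toEuclideanLin A)‖, S, le_rfl, hS,
    fun w _ _ => neg_le_of_abs_le (abs_rayleigh_le A w)⟩ ?_
  rintro r ⟨T, hTS, hT, hr⟩
  rw [eq_of_le_of_finrank_eq hTS (hT.trans hS.symm)] at hr
  exact hr v hv hv0

theorem le_ritzValue {S T : Submodule ℂ (EuclideanSpace ℂ (Fin n))} {k : ℕ} {r : ℝ}
    (hTS : T ≤ S) (hT : finrank ℂ T = k) (hk : 0 < k) (h : ∀ v ∈ T, v ≠ 0 → r ≤ rayleigh A v) :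
    r ≤ ritzValue A S k := by
  refine le_csSup ⟨‖LinearMap.toContinuousLinearMap (Matrix.toEuclideanLin A)‖, ?_⟩
    ⟨T, hTS, hT, h⟩
  rintro r' ⟨T', -, hT', hr'⟩
  obtain ⟨v, hv, hv0⟩ := exists_mem_ne_zero_of_ne_bot (p := T') (by rintro rfl; simp at hT'; omega)
  exact (hr' v hv hv0).trans (le_of_abs_le (abs_rayleigh_le A v))

variable {ι : Type*} [Fintype ι] (b : OrthonormalBasis ι ℂ (EuclideanSpace ℂ (Fin n)))
  {lam : ι → ℝ}

theorem rayleigh_sub_mul_norm_sq (hA : ∀ j, Matrix.toEuclideanLin A (b j) = (lam j : ℂ) • b j)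
    {v : EuclideanSpace ℂ (Fin n)} (hv : v ≠ 0) (μ : ℝ) :
    (rayleigh A v - μ) * ‖v‖ ^ 2 = ∑ j, (lam j - μ) * ‖inner ℂ (b j) v‖ ^ 2 := by
  have hv2 : ‖v‖ ^ 2 ≠ 0 := by positivity
  have hre := b.re_inner_self_apply_of_apply_eq_smul hA v
  rw [RCLike.re_to_complex] at hre
  rw [sub_mul, rayleigh, div_mul_cancel₀ _ hv2, ← b.sum_sq_norm_inner_right v, Finset.mul_sum, hre]
  simp only [sub_mul, Finset.sum_sub_distrib]

theorem le_rayleigh_iff (hA : ∀ j, Matrix.toEuclideanLin A (b j) = (lam j : ℂ) • b j)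
    {v : EuclideanSpace ℂ (Fin n)} (hv : v ≠ 0) (μ : ℝ) :
    μ ≤ rayleigh A v ↔ 0 ≤ ∑ j, (lam j - μ) * ‖inner ℂ (b j) v‖ ^ 2 := by
  rw [← rayleigh_sub_mul_norm_sq b hA hv, mul_nonneg_iff_of_pos_right (by positivity), sub_nonneg]

theorem rayleigh_le_of_inner_ne_zero (hA : ∀ j, Matrix.toEuclideanLin A (b j) = (lam j : ℂ) • b j)
    {v : EuclideanSpace ℂ (Fin n)} (hv : v ≠ 0) {μ : ℝ}
    (h : ∀ j, inner ℂ (b j) v ≠ 0 → lam j ≤ μ) : rayleigh A v ≤ μ := by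
  refine sub_nonpos.1 (nonpos_of_mul_nonpos_left ?_ (by positivity : 0 < ‖v‖ ^ 2))
  rw [rayleigh_sub_mul_norm_sq b hA hv]
  refine Finset.sum_nonpos fun j _ => ?_
  by_cases hj : inner ℂ (b j) v = 0
  · simp [hj]
  · exact mul_nonpos_of_nonpos_of_nonneg (sub_nonpos.2 (h j hj)) (by positivity)

end Rayleigh

theorem Submodule.exists_le_finrank_eq {K V : Type*} [DivisionRing K] [AddCommGroup V] [Module K V]
    (U : Submodule K V) [FiniteDimensional K U] {m : ℕ} (hm : m ≤ finrank K U) :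
    ∃ T ≤ U, finrank K T = m := by
  let bU := Module.finBasis K U
  let g : Fin m → V := fun k => bU (Fin.castLE hm k)
  have hg : LinearIndependent K g :=
    (bU.linearIndependent.map' U.subtype U.ker_subtype).comp _ (Fin.castLE_injective hm)
  refine ⟨span K (Set.range g), span_le.2 ?_, by rw [finrank_span_eq_card hg, Fintype.card_fin]⟩
  rintro _ ⟨k, rfl⟩
  exact (bU _).2

theorem Submodule.exists_le_finrank_eq_forall_inner_eq_zero {𝕜 E ι : Type*} [RCLike 𝕜]
    [NormedAddCommGroup E] [InnerProductSpace 𝕜 E] [FiniteDimensional 𝕜 E]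
    (S : Submodule 𝕜 E) (v : ι → E) (s : Finset ι) {m : ℕ} (hm : m + s.card ≤ finrank 𝕜 S) :
    ∃ T ≤ S, finrank 𝕜 T = m ∧ ∀ y ∈ T, ∀ j ∈ s, inner 𝕜 (v j) y = 0 := by
  classical
  set W := span 𝕜 (s.image v : Set E)
  have hW : finrank 𝕜 W ≤ s.card := (finrank_span_finset_le_card _).trans Finset.card_image_le
  have hdim := finrank_sup_add_finrank_inf_eq S Wᗮ
  have hsup := (S ⊔ Wᗮ).finrank_le
  rw [← W.finrank_add_finrank_orthogonal] at hsup
  obtain ⟨T, hT, hTm⟩ := (S ⊓ Wᗮ).exists_le_finrank_eq (m := m) (by omega)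
  refine ⟨T, hT.trans inf_le_left, hTm, fun y hy j hj => ?_⟩
  exact inner_right_of_mem_orthogonal (subset_span (mem_image_of_mem v hj)) (hT hy).2

theorem Submodule.finrank_map_eq_of_forall_eq_zero {K V W : Type*} [DivisionRing K] [AddCommGroup V]
    [Module K V] [AddCommGroup W] [Module K W] {T : Submodule K V} [FiniteDimensional K T]
    (f : V →ₗ[K] W) (h : ∀ y ∈ T, f y = 0 → y = 0) : finrank K (T.map f) = finrank K T := by
  rw [← LinearMap.range_domRestrict]
  exact LinearMap.finrank_range_of_inj <| LinearMap.ker_eq_bot.1 <|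
    LinearMap.ker_eq_bot'.2 fun y hy => Subtype.ext (h y y.2 hy)

theorem div_sub_le_div_sub {α β s t : ℝ} (hβα : β ≤ α) (hβs : β < s) (hst : s ≤ t) :
    (α - t) / (t - β) ≤ (α - s) / (s - β) := by
  rw [div_le_div_iff₀ (by linarith) (by linarith)]
  nlinarith [mul_nonneg (sub_nonneg.2 hβα) (sub_nonneg.2 hst)]

/-- The solution `η₀` of `(α - η₀) / (η₀ - β) = (ν / F)² (α - η) / (η - β)`, written as the convex
combination of `α` and `β` with weights `F²(η - β)` and `ν²(α - η)`. -/
noncomputable def ritzBound (α β η ν F : ℝ) : ℝ :=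
  (F ^ 2 * (η - β) * α + ν ^ 2 * (α - η) * β) / (F ^ 2 * (η - β) + ν ^ 2 * (α - η))

section RitzBound

variable {α β η ν F : ℝ}

theorem ritzBound_sub (hD : F ^ 2 * (η - β) + ν ^ 2 * (α - η) ≠ 0) :
    ritzBound α β η ν F - β = F ^ 2 * (η - β) * (α - β) / (F ^ 2 * (η - β) + ν ^ 2 * (α - η)) := by
  rw [ritzBound]; field_simp; ring

theorem sub_ritzBound (hD : F ^ 2 * (η - β) + ν ^ 2 * (α - η) ≠ 0) :
    α - ritzBound α β η ν F = ν ^ 2 * (α - η) * (α - β) / (F ^ 2 * (η - β) + ν ^ 2 * (α - η)) := by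
  rw [ritzBound]; field_simp; ring

variable (hβη : β < η) (hηα : η ≤ α) (hF : 0 < F)
include hβη hηα hF

theorem ritzBound_denom_pos : 0 < F ^ 2 * (η - β) + ν ^ 2 * (α - η) :=
  add_pos_of_pos_of_nonneg (mul_pos (by positivity) (sub_pos.2 hβη))
    (mul_nonneg (sq_nonneg ν) (sub_nonneg.2 hηα))

theorem lt_ritzBound : β < ritzBound α β η ν F := by
  have hD := ritzBound_denom_pos (ν := ν) hβη hηα hF
  rw [← sub_pos, ritzBound_sub hD.ne']
  exact div_pos (mul_pos (mul_pos (by positivity) (by linarith)) (by linarith)) hD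

theorem sub_ritzBound_div :
    (α - ritzBound α β η ν F) / (ritzBound α β η ν F - β) =
      ν ^ 2 / F ^ 2 * ((α - η) / (η - β)) := by
  have hD := ritzBound_denom_pos (ν := ν) hβη hηα hF
  have : α - β ≠ 0 := by linarith
  have : η - β ≠ 0 := by linarith
  rw [sub_ritzBound hD.ne', ritzBound_sub hD.ne']
  field_simp

theorem ritzBound_le : ritzBound α β η ν F ≤ α := by
  have hD := ritzBound_denom_pos (ν := ν) hβη hηα hF
  rw [← sub_nonneg, sub_ritzBound hD.ne']
  exact div_nonneg (mul_nonneg (mul_nonneg (sq_nonneg ν) (by linarith)) (by linarith)) hD.le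

-- The multiplier `ν²(η₀ - β)/(η - β)` makes the inequality an equality both at `t = α`, `|g| = F`
-- and at `t = β`, `|g| = ν`.
theorem mul_sub_le_sub_ritzBound_mul (hν : 0 ≤ ν) (hνF : ν ≤ F) {t g : ℝ}
    (ht : α ≤ t ∧ F ≤ |g| ∨ t ≤ β ∧ |g| ≤ ν) :
    ν ^ 2 * (ritzBound α β η ν F - β) / (η - β) * (t - η) ≤ (t - ritzBound α β η ν F) * g ^ 2 := by
  have hD := ritzBound_denom_pos (ν := ν) hβη hηα hF
  have hη₀ : ritzBound α β η ν F =
      β + F ^ 2 * (η - β) * (α - β) / (F ^ 2 * (η - β) + ν ^ 2 * (α - η)) := by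
    rw [← ritzBound_sub hD.ne']; ring
  have hηβ : η - β ≠ 0 := by linarith
  have hνF2 : ν ^ 2 ≤ F ^ 2 := pow_le_pow_left₀ hν hνF 2
  rcases ht with ⟨hαt, hFg⟩ | ⟨htβ, hgν⟩
  · have hgap : (t - ritzBound α β η ν F) * F ^ 2 -
        ν ^ 2 * (ritzBound α β η ν F - β) / (η - β) * (t - η) =
        F ^ 2 * (t - α) * (F ^ 2 - ν ^ 2) * (η - β) / (F ^ 2 * (η - β) + ν ^ 2 * (α - η)) := by
      rw [hη₀]; field_simp; ring
    calc _ ≤ (t - ritzBound α β η ν F) * F ^ 2 := by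
          rw [← sub_nonneg, hgap]
          exact div_nonneg (mul_nonneg (mul_nonneg (mul_nonneg (sq_nonneg F) (sub_nonneg.2 hαt))
            (sub_nonneg.2 hνF2)) (sub_nonneg.2 hβη.le)) hD.le
      _ ≤ (t - ritzBound α β η ν F) * g ^ 2 := by
          refine mul_le_mul_of_nonneg_left ?_ (by linarith [ritzBound_le hβη hηα hF (ν := ν)])
          rw [← sq_abs g]
          exact pow_le_pow_left₀ hF.le hFg 2
  · have hgap : (t - ritzBound α β η ν F) * ν ^ 2 -
        ν ^ 2 * (ritzBound α β η ν F - β) / (η - β) * (t - η) =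
        ν ^ 2 * (β - t) * (F ^ 2 - ν ^ 2) * (α - η) / (F ^ 2 * (η - β) + ν ^ 2 * (α - η)) := by
      rw [hη₀]; field_simp; ring
    calc _ ≤ (t - ritzBound α β η ν F) * ν ^ 2 := by
          rw [← sub_nonneg, hgap]
          exact div_nonneg (mul_nonneg (mul_nonneg (mul_nonneg (sq_nonneg ν) (sub_nonneg.2 htβ))
            (sub_nonneg.2 hνF2)) (sub_nonneg.2 hηα)) hD.le
      _ ≤ (t - ritzBound α β η ν F) * g ^ 2 := by
          refine mul_le_mul_of_nonpos_left ?_ (by linarith [lt_ritzBound hβη hηα hF (ν := ν)])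
          rw [← sq_abs g]
          exact pow_le_pow_left₀ (abs_nonneg g) hgν 2

end RitzBound

section Spectral

variable {n : ℕ} {A : Matrix (Fin n) (Fin n) ℂ}
  (b : OrthonormalBasis (Fin n) ℂ (EuclideanSpace ℂ (Fin n))) {lam : Fin n → ℝ}

theorem inner_matFun (f : ℝ → ℝ) (v : EuclideanSpace ℂ (Fin n)) (j : Fin n) :
    inner ℂ (b j) (matFun lam b f v) = f (lam j) * inner ℂ (b j) v :=
  b.inner_apply_of_apply_eq_smul (matFun_apply_of_orthonormal b.orthonormal lam f) v j

theorem rayleigh_le_of_inner_eq_zero_of_lt (hlam : Antitone lam)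
    (hA : ∀ j, Matrix.toEuclideanLin A (b j) = (lam j : ℂ) • b j)
    {v : EuclideanSpace ℂ (Fin n)} (hv : v ≠ 0) {k : Fin n} (h : ∀ j < k, inner ℂ (b j) v = 0) :
    rayleigh A v ≤ lam k :=
  rayleigh_le_of_inner_ne_zero b hA hv fun j hj => hlam (not_lt.1 fun hjk => hj (h j hjk))

theorem ritzValue_le_of_finrank_eq (hlam : Antitone lam)
    (hA : ∀ j, Matrix.toEuclideanLin A (b j) = (lam j : ℂ) • b j)
    {S : Submodule ℂ (EuclideanSpace ℂ (Fin n))} {k : ℕ} (hS : finrank ℂ S = k) (hk0 : 0 < k)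
    (hkn : k ≤ n) : ritzValue A S k ≤ lam ⟨k - 1, by omega⟩ := by
  obtain ⟨T, hTS, hT, hT0⟩ := S.exists_le_finrank_eq_forall_inner_eq_zero b
    (Finset.Iio ⟨k - 1, by omega⟩) (m := 1) (by simp [hS]; omega)
  obtain ⟨y, hy, hy0⟩ := exists_mem_ne_zero_of_ne_bot (p := T) (by rintro rfl; simp at hT)
  exact (ritzValue_le_rayleigh hS (hTS hy) hy0).trans
    (rayleigh_le_of_inner_eq_zero_of_lt b hlam hA hy0 fun j hj => hT0 y hy j (by simpa using hj))

theorem eq_zero_of_matFun_eq_zero (hlam : Antitone lam)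
    (hA : ∀ j, Matrix.toEuclideanLin A (b j) = (lam j : ℂ) • b j)
    {Y : Submodule ℂ (EuclideanSpace ℂ (Fin n))} {p : ℕ} (hY : finrank ℂ Y = p) (hp : p < n)
    (hη : lam ⟨p, hp⟩ < ritzValue A Y p) {f : ℝ → ℝ} (hf : ∀ j : Fin n, (j : ℕ) < p → f (lam j) ≠ 0)
    {y : EuclideanSpace ℂ (Fin n)} (hy : y ∈ Y) (h0 : matFun lam b f y = 0) : y = 0 := by
  by_contra hy0
  have hcoord (j : Fin n) (hj : j < ⟨p, hp⟩) : inner ℂ (b j) y = 0 := by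
    have := inner_matFun b (lam := lam) f y j
    rw [h0, inner_zero_right, eq_comm, mul_eq_zero] at this
    exact this.resolve_left (by exact_mod_cast hf j hj)
  have := rayleigh_le_of_inner_eq_zero_of_lt b hlam hA hy0 hcoord
  linarith [ritzValue_le_rayleigh (A := A) hY hy hy0]

theorem le_rayleigh_matFun (hA : ∀ j, Matrix.toEuclideanLin A (b j) = (lam j : ℂ) • b j)
    {f : ℝ → ℝ} {y : EuclideanSpace ℂ (Fin n)} (hy0 : y ≠ 0) (hfy : matFun lam b f y ≠ 0)
    {η μ κ : ℝ} (hκ : 0 ≤ κ) (hη : η ≤ rayleigh A y)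
    (h : ∀ j, inner ℂ (b j) y ≠ 0 → κ * (lam j - η) ≤ (lam j - μ) * f (lam j) ^ 2) :
    μ ≤ rayleigh A (matFun lam b f y) := by
  rw [le_rayleigh_iff b hA hy0] at hη
  rw [le_rayleigh_iff b hA hfy]
  calc 0 ≤ κ * ∑ j, (lam j - η) * ‖inner ℂ (b j) y‖ ^ 2 := mul_nonneg hκ hη
    _ = ∑ j, κ * (lam j - η) * ‖inner ℂ (b j) y‖ ^ 2 := by simp only [mul_sum, mul_assoc]
    _ ≤ ∑ j, (lam j - μ) * ‖inner ℂ (b j) (matFun lam b f y)‖ ^ 2 := by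
      refine sum_le_sum fun j _ => ?_
      rw [inner_matFun, norm_mul, Complex.norm_real, Real.norm_eq_abs, mul_pow, sq_abs,
        ← mul_assoc]
      by_cases hj : inner ℂ (b j) y = 0
      · simp [hj]
      · exact mul_le_mul_of_nonneg_right (h j hj) (by positivity)

theorem ritzBound_le_ritzValue_map (hlam : Antitone lam)
    (hA : ∀ j, Matrix.toEuclideanLin A (b j) = (lam j : ℂ) • b j)
    {Y : Submodule ℂ (EuclideanSpace ℂ (Fin n))} {p i : ℕ} (hY : finrank ℂ Y = p)
    (hi : 1 ≤ i) (hip : i ≤ p) (hpn : p < n)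
    (hβη : lam ⟨p, hpn⟩ < ritzValue A Y p) (hηα : ritzValue A Y p ≤ lam ⟨i - 1, by omega⟩)
    {f : ℝ → ℝ} {ν F : ℝ} (hν : 0 ≤ ν) (hνF : ν ≤ F) (hF : 0 < F)
    (hlarge : ∀ j : Fin n, (j : ℕ) < i → F ≤ |f (lam j)|)
    (hsmall : ∀ j : Fin n, p ≤ (j : ℕ) → |f (lam j)| ≤ ν)
    (hinj : ∀ y ∈ Y, matFun lam b f y = 0 → y = 0) :
    ritzBound (lam ⟨i - 1, by omega⟩) (lam ⟨p, hpn⟩) (ritzValue A Y p) ν F ≤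
      ritzValue A (Y.map (matFun lam b f)) i := by
  set η₀ := ritzBound (lam ⟨i - 1, by omega⟩) (lam ⟨p, hpn⟩) (ritzValue A Y p) ν F
  obtain ⟨Z, hZY, hZ, hZ0⟩ := Y.exists_le_finrank_eq_forall_inner_eq_zero b
    (Finset.Ico ⟨i, by omega⟩ ⟨p, hpn⟩) (m := i) (by simp [hY]; omega)
  have hZfin := Z.finrank_map_eq_of_forall_eq_zero (matFun lam b f) fun y hy => hinj y (hZY hy)
  refine le_ritzValue (map_mono hZY) (hZfin.trans hZ) (by omega) ?_
  rintro _ ⟨y, hy, rfl⟩ hfy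
  have hy0 : y ≠ 0 := by rintro rfl; exact hfy (map_zero _)
  have hκ : 0 ≤ ν ^ 2 * (η₀ - lam ⟨p, hpn⟩) / (ritzValue A Y p - lam ⟨p, hpn⟩) :=
    div_nonneg (mul_nonneg (sq_nonneg _) (sub_nonneg.2 (lt_ritzBound hβη hηα hF).le))
      (sub_nonneg.2 hβη.le)
  refine le_rayleigh_matFun b hA hy0 hfy hκ (ritzValue_le_rayleigh hY (hZY hy) hy0)
    fun j hj => mul_sub_le_sub_ritzBound_mul hβη hηα hF hν hνF ?_
  rcases lt_or_ge (j : ℕ) i with hji | hij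
  · exact .inl ⟨hlam (by simp [Fin.le_def]; omega), hlarge j hji⟩
  · have hpj : p ≤ (j : ℕ) := by
      by_contra! h
      exact hj (hZ0 y hy j (by simp [Fin.le_def, Fin.lt_def]; omega))
    exact .inr ⟨hlam (by simp [Fin.le_def]; omega), hsmall j hpj⟩

end Spectral

-- Indices are 0-based: `lam ⟨j, _⟩` is `λ_{j+1}`.
/-- (Theorem 3.1, bound (3.4).) With `η_p > λ_{p+1}` and
`|f(λ₁)| ≥ ⋯ ≥ |f(λ_p)| > max_{j>p}|f(λ_j)| = ν_p`, the subspace `𝒴' = f(A)𝒴`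
has dimension `p`, its `i`-th largest Ritz value `η'_i` satisfies `η'_i > λ_{p+1}`
and `(λ_i − η'_i)/(η'_i − λ_{p+1}) ≤ (ν_p²/|f(λ_i)|²)·(λ_i − η_p)/(η_p − λ_{p+1})`.
(0-indexed: `lam ⟨j⟩` is `λ_{j+1}`.) -/
theorem stmt11 {n p i : ℕ} (hi : 1 ≤ i) (hip : i ≤ p) (hpn : p < n)
    (A : Matrix (Fin n) (Fin n) ℂ)
    (lam : Fin n → ℝ) (hlam : Antitone lam)
    (x : Fin n → EuclideanSpace ℂ (Fin n)) (hx : Orthonormal ℂ x)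
    (heig : ∀ j, Matrix.toEuclideanLin A (x j) = (lam j : ℂ) • x j)
    (Y : Submodule ℂ (EuclideanSpace ℂ (Fin n))) (hY : Module.finrank ℂ Y = p)
    (hηp : lam ⟨p, hpn⟩ < ritzValue A Y p)
    (f : ℝ → ℝ) (νp : ℝ)
    (hνp : IsGreatest ((fun j => |f (lam j)|) '' {j : Fin n | p ≤ (j : ℕ)}) νp)
    (hmono : ∀ j k : Fin n, (j : ℕ) ≤ (k : ℕ) → (k : ℕ) < p →
      |f (lam k)| ≤ |f (lam j)|)
    (hgt : νp < |f (lam ⟨p - 1, by omega⟩)|) :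
    Module.finrank ℂ (Y.map (matFun lam x f)) = p ∧
    lam ⟨p, hpn⟩ < ritzValue A (Y.map (matFun lam x f)) i ∧
    (lam ⟨i - 1, by omega⟩ - ritzValue A (Y.map (matFun lam x f)) i) /
        (ritzValue A (Y.map (matFun lam x f)) i - lam ⟨p, hpn⟩) ≤
      νp ^ 2 / |f (lam ⟨i - 1, by omega⟩)| ^ 2 *
        ((lam ⟨i - 1, by omega⟩ - ritzValue A Y p) /
          (ritzValue A Y p - lam ⟨p, hpn⟩)) := by
  obtain ⟨b, rfl⟩ := hx.exists_orthonormalBasis_coe_eq (by simp)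
  set α := lam ⟨i - 1, by omega⟩
  set β := lam ⟨p, hpn⟩
  set η := ritzValue A Y p
  set F := |f α|
  set η₀ := ritzBound α β η νp F
  have hν : 0 ≤ νp := by obtain ⟨j, -, rfl⟩ := hνp.1; exact abs_nonneg _
  have hlt (j : Fin n) (hj : (j : ℕ) < p) : νp < |f (lam j)| :=
    hgt.trans_le (hmono _ _ (by simp; omega) (by simp; omega))
  have hF : 0 < F := hν.trans_lt (hlt _ (by simp; omega))
  have hηα : η ≤ α :=
    (ritzValue_le_of_finrank_eq b hlam heig hY (by omega) hpn.le).trans (hlam (by simp; omega))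
  have hinj : ∀ y ∈ Y, matFun lam b f y = 0 → y = 0 := fun y =>
    eq_zero_of_matFun_eq_zero b hlam heig hY hpn hηp fun j hj => abs_pos.1 (hν.trans_lt (hlt j hj))
  have hβη₀ : β < η₀ := lt_ritzBound hηp hηα hF
  have hη₀ : η₀ ≤ ritzValue A (Y.map (matFun lam b f)) i :=
    ritzBound_le_ritzValue_map b hlam heig hY hi hip hpn hηp hηα hν (hlt _ (by simp; omega)).le hF
      (fun j hj => hmono _ _ (by simp; omega) (by simp; omega)) (fun j hj => hνp.2 ⟨j, hj, rfl⟩)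
      hinj
  refine ⟨(Y.finrank_map_eq_of_forall_eq_zero _ hinj).trans hY, hβη₀.trans_le hη₀, ?_⟩
  calc _ ≤ (α - η₀) / (η₀ - β) := div_sub_le_div_sub (hηp.trans_le hηα).le hβη₀ hη₀
    _ = _ := sub_ritzBound_div hηp hηα hF
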